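/- arXiv:1203.4451 — 2 statements merged into one kernel-verified Lean document; each statement's English description precedes it below -/
import Mathlib

section
/- Let μ > 0 and let a, w ∈ (ℝ^d)^p. Then w = P_μ(w + a) if and only if w is a subgradient of the function μ‖·‖₁ at a, i.e. if and only if for all b ∈ (ℝ^d)^p one has μ‖b‖₁ ≥ μ‖a‖₁ + ⟨w, b − a⟩. -/
/-!
Both sides split over the blocks: `w = P_μ(w + a)` is a blockwise identity, and the subgradient
inequality of a separable function holds iff it holds in each block (move `b` in one block only).
In a single block both sides say `‖wᵢ‖ ≤ μ` and `⟪wᵢ, aᵢ⟫ = μ‖aᵢ‖`; for `aᵢ ≠ 0` this is the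
equality case of Cauchy–Schwarz, i.e. `wᵢ = μ aᵢ / ‖aᵢ‖`, which is what `P_μ` returns on
`wᵢ + aᵢ`, a vector of norm `μ + ‖aᵢ‖` on the ray of `aᵢ`.
-/

open scoped RealInnerProductSpace

/-- Componentwise projection `P_λ` on `(ℝ^d)^p`. -/
noncomputable def Pproj {d p : ℕ} (lam : ℝ)
    (w : PiLp 2 (fun _ : Fin p => EuclideanSpace ℝ (Fin d))) :
    PiLp 2 (fun _ : Fin p => EuclideanSpace ℝ (Fin d)) :=
  WithLp.toLp 2 (fun i => if lam < ‖w i‖ then (lam / ‖w i‖) • w i else w i)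

section InnerProductSpace

variable {E : Type*} [NormedAddCommGroup E] [InnerProductSpace ℝ E]

theorem sameRay_iff_inner_eq_norm_mul {x y : E} : SameRay ℝ x y ↔ ⟪x, y⟫ = ‖x‖ * ‖y‖ := by
  rw [inner_eq_norm_mul_iff_real, sameRay_iff_norm_smul_eq, eq_comm]

theorem inner_le_mul_norm_of_norm_le {mu : ℝ} {y : E} (hy : ‖y‖ ≤ mu) (x : E) :
    ⟪y, x⟫ ≤ mu * ‖x‖ :=
  (real_inner_le_norm y x).trans (mul_le_mul_of_nonneg_right hy (norm_nonneg x))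

theorem subgradient_mul_norm_iff {mu : ℝ} (hmu : 0 ≤ mu) {x y : E} :
    (∀ b, mu * ‖x‖ + ⟪y, b - x⟫ ≤ mu * ‖b‖) ↔ ‖y‖ ≤ mu ∧ ⟪y, x⟫ = mu * ‖x‖ := by
  constructor
  · intro h
    have hy : ‖y‖ ≤ mu := by
      have hxy := h (x + y)
      rw [add_sub_cancel_left, real_inner_self_eq_norm_sq] at hxy
      have := mul_le_mul_of_nonneg_left (norm_add_le x y) hmu
      nlinarith [norm_nonneg y]
    have h0 := h 0
    rw [zero_sub, inner_neg_right, norm_zero, mul_zero] at h0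
    exact ⟨hy, le_antisymm (inner_le_mul_norm_of_norm_le hy x) (by linarith)⟩
  · rintro ⟨hy, hyx⟩ b
    rw [inner_sub_right, hyx]
    linarith [inner_le_mul_norm_of_norm_le hy b]

noncomputable def radialRetraction (mu : ℝ) (v : E) : E :=
  if mu < ‖v‖ then (mu / ‖v‖) • v else v

theorem eq_radialRetraction_add_iff {mu : ℝ} (hmu : 0 ≤ mu) {x y : E} :
    y = radialRetraction mu (y + x) ↔ ‖y‖ ≤ mu ∧ ⟪y, x⟫ = mu * ‖x‖ := by
  unfold radialRetraction
  constructor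
  · split_ifs with hlt
    · set v := y + x with hv
      have hv0 : 0 < ‖v‖ := hmu.trans_lt hlt
      set c := mu / ‖v‖
      have hc : 0 ≤ c := div_nonneg hmu hv0.le
      have hc1 : 0 ≤ 1 - c := sub_nonneg.2 ((div_le_one hv0).2 hlt.le)
      intro hy
      have hx : x = (1 - c) • v := by rw [sub_smul, one_smul, ← hy, hv, add_sub_cancel_left]
      have hny : ‖y‖ = mu := by
        rw [hy, norm_smul_of_nonneg hc, div_mul_cancel₀ _ hv0.ne']
      have hray : SameRay ℝ y x := by
        rw [hy, hx]
        exact (SameRay.sameRay_nonneg_smul_left v hc).nonneg_smul_right hc1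
      exact ⟨hny.le, by rw [sameRay_iff_inner_eq_norm_mul.1 hray, hny]⟩
    · intro hy
      have hx : x = 0 := by simpa using hy
      subst hx
      simpa using hlt
  · rintro ⟨hy, hyx⟩
    rcases eq_or_ne x 0 with rfl | hx
    · simp [hy]
    have hny : ‖y‖ = mu := by
      refine le_antisymm hy (le_of_mul_le_mul_right ?_ (norm_pos_iff.2 hx))
      exact hyx ▸ real_inner_le_norm y x
    have hray : SameRay ℝ y x := sameRay_iff_inner_eq_norm_mul.2 (by rw [hyx, hny])
    have hlt : mu < ‖y + x‖ := by
      rw [hray.norm_add, hny]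
      exact lt_add_of_pos_right mu (norm_pos_iff.2 hx)
    rw [if_pos hlt, ← hny, div_eq_inv_mul, mul_smul,
      (SameRay.rfl.add_right hray).norm_smul_eq, inv_smul_smul₀ (hmu.trans_lt hlt).ne']

end InnerProductSpace

section PiLp

variable {ι : Type*} [Fintype ι] {E : ι → Type*} [∀ i, NormedAddCommGroup (E i)]
  [∀ i, InnerProductSpace ℝ (E i)]

theorem PiLp.subgradient_sum_iff (f : ∀ i, E i → ℝ) (a w : PiLp 2 E) :
    (∀ b : PiLp 2 E, ∑ i, f i (a i) + ⟪w, b - a⟫ ≤ ∑ i, f i (b i)) ↔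
      ∀ i (c : E i), f i (a i) + ⟪w i, c - a i⟫ ≤ f i c := by
  classical
  -- Since `g i (a i) = 0`, moving `b` in a single block tests that block alone.
  set g : ∀ i, E i → ℝ := fun i c => f i c - f i (a i) - ⟪w i, c - a i⟫ with hg
  have hsum : ∀ b : PiLp 2 E,
      ∑ i, f i (a i) + ⟪w, b - a⟫ ≤ ∑ i, f i (b i) ↔ 0 ≤ ∑ i, g i (b i) := by
    intro b
    simp only [hg, PiLp.inner_apply, PiLp.sub_apply, Finset.sum_sub_distrib]
    constructor <;> intro h <;> linarith
  have hblock : ∀ i (c : E i), f i (a i) + ⟪w i, c - a i⟫ ≤ f i c ↔ 0 ≤ g i c := by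
    intro i c
    simp only [hg]
    constructor <;> intro h <;> linarith
  simp only [hsum, hblock]
  refine ⟨fun h i c => ?_, fun h b => Finset.sum_nonneg fun i _ => h i (b i)⟩
  have := h (WithLp.toLp 2 (Function.update (WithLp.ofLp a) i c))
  rwa [Finset.sum_eq_single i (fun j _ hj => by simp [hg, hj]) (by simp),
    PiLp.toLp_apply, Function.update_self] at this

end PiLp

theorem Pproj_apply {d p : ℕ} (lam : ℝ) (w : PiLp 2 (fun _ : Fin p => EuclideanSpace ℝ (Fin d)))
    (i : Fin p) : Pproj lam w i = radialRetraction lam (w i) :=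
  rfl

/-- For `μ > 0` and `a, w ∈ (ℝ^d)^p`, `w = P_μ(w + a)` holds if and only if `w` is a
subgradient of the block `ℓ¹`-norm functional `μ‖·‖₁` at `a`, i.e. iff for all `b`,
`μ‖b‖₁ ≥ μ‖a‖₁ + ⟨w, b − a⟩`. -/
theorem stmt3 {d p : ℕ} (mu : ℝ) (hmu : 0 < mu)
    (a w : PiLp 2 (fun _ : Fin p => EuclideanSpace ℝ (Fin d))) :
    w = Pproj mu (w + a) ↔
      ∀ b : PiLp 2 (fun _ : Fin p => EuclideanSpace ℝ (Fin d)),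
        mu * (∑ i, ‖b i‖) ≥ mu * (∑ i, ‖a i‖) + ⟪w, b - a⟫ := by
  have hfix : w = Pproj mu (w + a) ↔ ∀ i, ‖w i‖ ≤ mu ∧ ⟪w i, a i⟫ = mu * ‖a i‖ := by
    rw [WithLp.ext_iff, funext_iff]
    simp only [Pproj_apply, PiLp.add_apply]
    exact forall_congr' fun i => eq_radialRetraction_add_iff hmu.le
  have hsub := PiLp.subgradient_sum_iff (fun _ c => mu * ‖c‖) a w
  simp only [← Finset.mul_sum] at hsub
  simp only [hfix, ge_iff_le, hsub, subgradient_mul_norm_iff hmu.le]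
end

section
/- Let (û, ŵ, v̂, ẑ) be a fixed point of the GBPDNA iteration and let (uⁿ, wⁿ, vⁿ, zⁿ) be generated by one step of the iteration. Let L : ℝ^N → ℝ^N and B : (ℝ^d)^p → (ℝ^d)^p be invertible linear maps with LᵀL = I − KᵀK and BᵀB = I − AAᵀ. Then ‖L(u^{n+1} − û)‖² + ‖B(w^{n+1} − ŵ)‖² + θ⁻¹‖v^{n+1} − v̂‖² + ‖z^{n+1} − ẑ‖² ≤ ‖L(uⁿ − û)‖² + ‖B(wⁿ − ŵ)‖² + θ⁻¹‖vⁿ − v̂‖² + ‖zⁿ − ẑ‖² − ‖L(u^{n+1} − uⁿ)‖² − ‖B(w^{n+1} − wⁿ)‖² − ‖ẑ − zⁿ − K(û − u^{n+1})‖². -/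
/-!
Write `a = uⁿ − û`, `a' = u^{n+1} − û`, and similarly `b, b'`, `c, c'`, `e, e'` for `w, v, z`.
The identities `‖L x‖² = ‖x‖² − ‖K x‖²` and `‖B ξ‖² = ‖ξ‖² − ‖Aᵀ ξ‖²` express the decrease of
the Lyapunov function through inner products of these differences. Both projections are firmly
nonexpansive; comparing each projection step of the iteration with the same step at the fixed
point bounds those inner products from below, and what remains is `(1 − θ)‖K a' − e'‖² ≥ 0`.
-/

open scoped RealInnerProductSpace
open Filter Topology

/-- Projection onto the closed `ℓ₂`-ball of radius `ε` centered at `y`. -/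
noncomputable def Qproj {m : ℕ} (y : EuclideanSpace ℝ (Fin m)) (eps : ℝ)
    (v : EuclideanSpace ℝ (Fin m)) : EuclideanSpace ℝ (Fin m) :=
  if eps < ‖v - y‖ then y + (eps / ‖v - y‖) • (v - y) else v

def IsFirmlyNonexpansive {E : Type*} [NormedAddCommGroup E] [InnerProductSpace ℝ E]
    (P : E → E) : Prop :=
  ∀ x y, ‖P x - P y‖ ^ 2 ≤ ⟪P x - P y, x - y⟫

section FirmlyNonexpansive

variable {E : Type*} [NormedAddCommGroup E] [InnerProductSpace ℝ E] {P : E → E}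

theorem isFirmlyNonexpansive_iff_inner_nonneg :
    IsFirmlyNonexpansive P ↔ ∀ x y, 0 ≤ ⟪(x - P x) - (y - P y), P x - P y⟫ := by
  refine forall₂_congr fun x y => ?_
  have hsplit : (x - P x) - (y - P y) = (x - y) - (P x - P y) := by abel
  rw [hsplit, inner_sub_left (x - y), real_inner_self_eq_norm_sq, real_inner_comm (x - y),
    sub_nonneg]

theorem isFirmlyNonexpansive_of_inner_le_zero {S : Set E} (hmem : ∀ x, P x ∈ S)
    (hvi : ∀ x, ∀ c ∈ S, ⟪x - P x, c - P x⟫ ≤ 0) : IsFirmlyNonexpansive P := by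
  refine isFirmlyNonexpansive_iff_inner_nonneg.2 fun x y => ?_
  have hx := hvi x (P y) (hmem y)
  have hy := hvi y (P x) (hmem x)
  rw [← neg_sub (P x) (P y), inner_neg_right] at hx
  rw [inner_sub_left]
  linarith

theorem IsFirmlyNonexpansive.piLp {ι : Type*} [Fintype ι] {E : ι → Type*}
    [∀ i, NormedAddCommGroup (E i)] [∀ i, InnerProductSpace ℝ (E i)] {f : ∀ i, E i → E i}
    (hf : ∀ i, IsFirmlyNonexpansive (f i)) :
    IsFirmlyNonexpansive fun w : PiLp 2 E => WithLp.toLp 2 fun i => f i (w i) := by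
  intro w w'
  rw [PiLp.norm_sq_eq_of_L2, PiLp.inner_apply]
  exact Finset.sum_le_sum fun i _ => hf i (w i) (w' i)

end FirmlyNonexpansive

section Projections

variable {m : ℕ} (y : EuclideanSpace ℝ (Fin m)) {eps : ℝ}

theorem qproj_mem_closedBall (heps : 0 ≤ eps) (x : EuclideanSpace ℝ (Fin m)) :
    Qproj y eps x ∈ Metric.closedBall y eps := by
  rw [mem_closedBall_iff_norm]
  unfold Qproj
  split_ifs with h
  · have hr : 0 < ‖x - y‖ := heps.trans_lt h
    rw [add_sub_cancel_left, norm_smul, Real.norm_of_nonneg (div_nonneg heps hr.le),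
      div_mul_cancel₀ _ hr.ne']
  · exact not_lt.1 h

theorem inner_sub_qproj_le_zero (heps : 0 ≤ eps) (x : EuclideanSpace ℝ (Fin m))
    {c : EuclideanSpace ℝ (Fin m)} (hc : c ∈ Metric.closedBall y eps) :
    ⟪x - Qproj y eps x, c - Qproj y eps x⟫ ≤ 0 := by
  rw [mem_closedBall_iff_norm] at hc
  unfold Qproj
  split_ifs with h
  · set r := ‖x - y‖
    have hr : 0 < r := heps.trans_lt h
    set t := eps / r
    have ht1 : t ≤ 1 := (div_le_one hr).2 h.le
    have htr : t * r = eps := div_mul_cancel₀ _ hr.ne'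
    have hx : x - (y + t • (x - y)) = (1 - t) • (x - y) := by module
    have hc' : c - (y + t • (x - y)) = (c - y) - t • (x - y) := by module
    have hcs : ⟪x - y, c - y⟫ ≤ r * eps :=
      (real_inner_le_norm _ _).trans (mul_le_mul_of_nonneg_left hc hr.le)
    rw [hx, hc', real_inner_smul_left, inner_sub_right, real_inner_smul_right,
      real_inner_self_eq_norm_sq]
    nlinarith
  · simp

theorem qproj_isFirmlyNonexpansive (heps : 0 ≤ eps) :
    IsFirmlyNonexpansive (Qproj y eps) :=
  isFirmlyNonexpansive_of_inner_le_zero (qproj_mem_closedBall y heps)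
    fun x _ hc => inner_sub_qproj_le_zero y heps x hc

theorem pproj_eq_toLp_qproj {d p : ℕ} (lam : ℝ) :
    Pproj (d := d) (p := p) lam = fun w => WithLp.toLp 2 fun i => Qproj 0 lam (w i) := by
  funext w
  simp [Pproj, Qproj]

theorem pproj_isFirmlyNonexpansive {d p : ℕ} {mu : ℝ} (hmu : 0 ≤ mu) :
    IsFirmlyNonexpansive (Pproj (d := d) (p := p) mu) := by
  rw [pproj_eq_toLp_qproj]
  exact IsFirmlyNonexpansive.piLp fun _ => qproj_isFirmlyNonexpansive 0 hmu

end Projections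

section Descent

open ContinuousLinearMap

variable {E F G : Type*}
  [NormedAddCommGroup E] [InnerProductSpace ℝ E]
  [NormedAddCommGroup F] [InnerProductSpace ℝ F]
  [NormedAddCommGroup G] [InnerProductSpace ℝ G]

theorem norm_map_sq_sub_norm_map_sq_sub_norm_map_sq (L : E →L[ℝ] E) (x x' : E) :
    ‖L x‖ ^ 2 - ‖L x'‖ ^ 2 - ‖L (x - x')‖ ^ 2 = 2 * ⟪L (x - x'), L x'⟫ := by
  have h := norm_add_sq_real (L (x - x')) (L x')
  rw [← map_add, sub_add_cancel] at h
  linarith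

theorem multiplier_gain {θ : ℝ} (hθ0 : 0 < θ) (hθ1 : θ ≤ 1) {k c c' e e' : F}
    (hc : c' = c + θ • (k - e')) (hproj : 0 ≤ ⟪k + c - e', e'⟫) :
    θ⁻¹ * ‖c'‖ ^ 2 + ‖e'‖ ^ 2 + ‖k - e‖ ^ 2 ≤
      θ⁻¹ * ‖c‖ ^ 2 + ‖e‖ ^ 2 + 2 * (⟪c - e, k⟫ + ‖k‖ ^ 2) := by
  have hc' : θ⁻¹ * ‖c'‖ ^ 2 = θ⁻¹ * ‖c‖ ^ 2 + 2 * ⟪c, k - e'⟫ + θ * ‖k - e'‖ ^ 2 := by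
    rw [hc, norm_add_sq_real, real_inner_smul_right, norm_smul, Real.norm_of_nonneg hθ0.le]
    field_simp
  rw [inner_sub_left, inner_add_left, real_inner_self_eq_norm_sq] at hproj
  rw [inner_sub_right] at hc'
  rw [inner_sub_left]
  have hslack : 0 ≤ (1 - θ) * ‖k - e'‖ ^ 2 := mul_nonneg (by linarith) (sq_nonneg _)
  linarith [norm_sub_sq_real k e, norm_sub_sq_real k e', real_inner_comm k e, real_inner_comm c e]

variable [CompleteSpace E] [CompleteSpace F] [CompleteSpace G]

theorem inner_map_map_of_adjoint_comp_self_eq {L : E →L[ℝ] E} {T : E →L[ℝ] F}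
    (h : L.adjoint.comp L = ContinuousLinearMap.id ℝ E - T.adjoint.comp T) (x x' : E) :
    ⟪L x, L x'⟫ = ⟪x, x'⟫ - ⟪T x, T x'⟫ := by
  rw [← adjoint_inner_right, ← comp_apply, h, sub_apply, inner_sub_right, comp_apply,
    adjoint_inner_right, id_apply]

theorem primal_dual_gain (K : E →L[ℝ] F) (A : E →L[ℝ] G) {L : E →L[ℝ] E} {B : G →L[ℝ] G}
    (hL : L.adjoint.comp L = ContinuousLinearMap.id ℝ E - K.adjoint.comp K)
    (hB : B.adjoint.comp B = ContinuousLinearMap.id ℝ G - A.comp A.adjoint)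
    {a a' : E} {b b' : G} (r : F) (hstep : a - a' = K.adjoint (r + K a) + A.adjoint b')
    (hproj : 0 ≤ ⟪b - b' + A (a' + A.adjoint (b' - b)), b'⟫) :
    2 * (⟪r, K a'⟫ + ‖K a'‖ ^ 2) ≤
      (‖L a‖ ^ 2 - ‖L a'‖ ^ 2 - ‖L (a - a')‖ ^ 2)
        + (‖B b‖ ^ 2 - ‖B b'‖ ^ 2 - ‖B (b - b')‖ ^ 2) := by
  have hB' : B.adjoint.comp B = ContinuousLinearMap.id ℝ G - A.adjoint.adjoint.comp A.adjoint := by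
    rwa [adjoint_adjoint]
  rw [norm_map_sq_sub_norm_map_sq_sub_norm_map_sq, norm_map_sq_sub_norm_map_sq_sub_norm_map_sq,
    inner_map_map_of_adjoint_comp_self_eq hL, inner_map_map_of_adjoint_comp_self_eq hB']
  have hu : ⟪a - a', a'⟫ = ⟪r + K a, K a'⟫ + ⟪b', A a'⟫ := by
    rw [hstep, inner_add_left, adjoint_inner_left, adjoint_inner_left]
  have hKu : ⟪K (a - a'), K a'⟫ = ⟪K a, K a'⟫ - ‖K a'‖ ^ 2 := by
    rw [map_sub, inner_sub_left, real_inner_self_eq_norm_sq]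
  have hw : ⟪A (A.adjoint (b' - b)), b'⟫ = -⟪A.adjoint (b - b'), A.adjoint b'⟫ := by
    rw [← adjoint_inner_right, ← neg_sub b, map_neg, inner_neg_left]
  rw [map_add, inner_add_left, inner_add_left, hw, real_inner_comm b' (A a')] at hproj
  rw [inner_add_left] at hu
  linarith

theorem gbpdna_descent (K : E →L[ℝ] F) (A : E →L[ℝ] G) {L : E →L[ℝ] E} {B : G →L[ℝ] G}
    (hL : L.adjoint.comp L = ContinuousLinearMap.id ℝ E - K.adjoint.comp K)
    (hB : B.adjoint.comp B = ContinuousLinearMap.id ℝ G - A.comp A.adjoint)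
    {θ : ℝ} (hθ0 : 0 < θ) (hθ1 : θ ≤ 1) {P : G → G} {Q : F → F}
    (hP : IsFirmlyNonexpansive P) (hQ : IsFirmlyNonexpansive Q)
    {un ubarnp1 unp1 uh : E} {wn wnp1 wh : G} {vn vnp1 zn znp1 vh zh : F}
    (hubar : ubarnp1 = un - K.adjoint (vn + K un - zn) - A.adjoint wn)
    (hw : wnp1 = P (wn + A ubarnp1))
    (hu : unp1 = un - K.adjoint (vn + K un - zn) - A.adjoint wnp1)
    (hz : znp1 = Q (K unp1 + vn))
    (hv : vnp1 = vn + θ • (K unp1 - znp1))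
    (hfw : wh = P (wh + A uh))
    (hfu : K.adjoint (vh + K uh - zh) + A.adjoint wh = 0)
    (hfz : zh = Q (K uh + vh))
    (hfv : K uh = zh) :
    ‖L (unp1 - uh)‖ ^ 2 + ‖B (wnp1 - wh)‖ ^ 2 + θ⁻¹ * ‖vnp1 - vh‖ ^ 2 + ‖znp1 - zh‖ ^ 2 ≤
      ‖L (un - uh)‖ ^ 2 + ‖B (wn - wh)‖ ^ 2 + θ⁻¹ * ‖vn - vh‖ ^ 2 + ‖zn - zh‖ ^ 2
        - ‖L (unp1 - un)‖ ^ 2 - ‖B (wnp1 - wn)‖ ^ 2 - ‖zh - zn - K (uh - unp1)‖ ^ 2 := by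
  have hu_step : (un - uh) - (unp1 - uh) =
      K.adjoint (((vn - vh) - (zn - zh)) + K (un - uh)) + A.adjoint (wnp1 - wh) := by
    rw [← sub_eq_zero, ← hfu, hu]
    simp only [map_add, map_sub]
    abel
  have hw_proj : 0 ≤ ⟪(wn - wh) - (wnp1 - wh)
      + A ((unp1 - uh) + A.adjoint ((wnp1 - wh) - (wn - wh))), wnp1 - wh⟫ := by
    have h := isFirmlyNonexpansive_iff_inner_nonneg.1 hP (wn + A ubarnp1) (wh + A uh)
    rw [← hw, ← hfw] at h
    subst hubar hu
    convert h using 2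
    simp only [map_add, map_sub]
    abel
  have hz_proj : 0 ≤ ⟪K (unp1 - uh) + (vn - vh) - (znp1 - zh), znp1 - zh⟫ := by
    have h := isFirmlyNonexpansive_iff_inner_nonneg.1 hQ (K unp1 + vn) (K uh + vh)
    rw [← hz, ← hfz] at h
    convert h using 2
    simp only [map_sub]
    abel
  have hv_step : vnp1 - vh = (vn - vh) + θ • (K (unp1 - uh) - (znp1 - zh)) := by
    rw [hv, map_sub, hfv]
    module
  have hLstep : ‖L ((un - uh) - (unp1 - uh))‖ = ‖L (unp1 - un)‖ := by
    rw [sub_sub_sub_cancel_right, ← norm_neg, ← map_neg, neg_sub]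
  have hBstep : ‖B ((wn - wh) - (wnp1 - wh))‖ = ‖B (wnp1 - wn)‖ := by
    rw [sub_sub_sub_cancel_right, ← norm_neg, ← map_neg, neg_sub]
  have hKstep : zh - zn - K (uh - unp1) = K (unp1 - uh) - (zn - zh) := by
    simp only [map_sub]
    abel
  have hgain := primal_dual_gain K A hL hB _ hu_step hw_proj
  have hmult := multiplier_gain (e := zn - zh) hθ0 hθ1 hv_step hz_proj
  rw [hLstep, hBstep] at hgain
  rw [hKstep]
  linarith

end Descent

theorem stmt5_general {N m p d : ℕ}
    (K : EuclideanSpace ℝ (Fin N) →L[ℝ] EuclideanSpace ℝ (Fin m))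
    (A : EuclideanSpace ℝ (Fin N) →L[ℝ] PiLp 2 (fun _ : Fin p => EuclideanSpace ℝ (Fin d)))
    (y : EuclideanSpace ℝ (Fin m)) (eps : ℝ) (heps : 0 ≤ eps) (mu : ℝ) (hmu : 0 < mu)
    (θ : ℝ) (hθ0 : 0 < θ) (hθ1 : θ ≤ 1)
    (L : EuclideanSpace ℝ (Fin N) →L[ℝ] EuclideanSpace ℝ (Fin N))
    (B : PiLp 2 (fun _ : Fin p => EuclideanSpace ℝ (Fin d)) →L[ℝ]
      PiLp 2 (fun _ : Fin p => EuclideanSpace ℝ (Fin d)))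
    (hL : L.adjoint.comp L = ContinuousLinearMap.id ℝ _ - K.adjoint.comp K)
    (hB : B.adjoint.comp B = ContinuousLinearMap.id ℝ _ - A.comp A.adjoint)
    (un ubarnp1 unp1 : EuclideanSpace ℝ (Fin N))
    (wn wnp1 : PiLp 2 (fun _ : Fin p => EuclideanSpace ℝ (Fin d)))
    (vn vnp1 zn znp1 : EuclideanSpace ℝ (Fin m))
    (hubar : ubarnp1 = un - K.adjoint (vn + K un - zn) - A.adjoint wn)
    (hw : wnp1 = Pproj mu (wn + A ubarnp1))
    (hu : unp1 = un - K.adjoint (vn + K un - zn) - A.adjoint wnp1)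
    (hz : znp1 = Qproj y eps (K unp1 + vn))
    (hv : vnp1 = vn + θ • (K unp1 - znp1))
    (uh : EuclideanSpace ℝ (Fin N))
    (wh : PiLp 2 (fun _ : Fin p => EuclideanSpace ℝ (Fin d)))
    (vh zh : EuclideanSpace ℝ (Fin m))
    (hfw : wh = Pproj mu (wh + A uh))
    (hfu : K.adjoint (vh + K uh - zh) + A.adjoint wh = 0)
    (hfz : zh = Qproj y eps (K uh + vh))
    (hfv : K uh = zh)
    :
    ‖L (unp1 - uh)‖ ^ 2 + ‖B (wnp1 - wh)‖ ^ 2 + θ⁻¹ * ‖vnp1 - vh‖ ^ 2 + ‖znp1 - zh‖ ^ 2 ≤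
      ‖L (un - uh)‖ ^ 2 + ‖B (wn - wh)‖ ^ 2 + θ⁻¹ * ‖vn - vh‖ ^ 2 + ‖zn - zh‖ ^ 2
        - ‖L (unp1 - un)‖ ^ 2 - ‖B (wnp1 - wn)‖ ^ 2 - ‖zh - zn - K (uh - unp1)‖ ^ 2 :=
  gbpdna_descent K A hL hB hθ0 hθ1 (pproj_isFirmlyNonexpansive hmu.le)
    (qproj_isFirmlyNonexpansive y heps) hubar hw hu hz hv hfw hfu hfz hfv

/-- The key one-step descent inequality in the proof of convergence of GBPDNA: with `L, B`
invertible and `LᵀL = I − KᵀK`, `BᵀB = I − AAᵀ`,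
`‖L(u^{n+1}−û)‖² + ‖B(w^{n+1}−ŵ)‖² + θ⁻¹‖v^{n+1}−v̂‖² + ‖z^{n+1}−ẑ‖²` decreases by at least
`‖L(u^{n+1}−uⁿ)‖² + ‖B(w^{n+1}−wⁿ)‖² + ‖ẑ−zⁿ−K(û−u^{n+1})‖²`. -/
theorem stmt5 {N m p d : ℕ}
    (K : EuclideanSpace ℝ (Fin N) →L[ℝ] EuclideanSpace ℝ (Fin m))
    (A : EuclideanSpace ℝ (Fin N) →L[ℝ] PiLp 2 (fun _ : Fin p => EuclideanSpace ℝ (Fin d)))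
    (hK : ‖K‖ < 1) (hA : ‖A‖ < 1)
    (y : EuclideanSpace ℝ (Fin m)) (eps : ℝ) (heps : 0 ≤ eps) (mu : ℝ) (hmu : 0 < mu)
    (θ : ℝ) (hθ0 : 0 < θ) (hθ1 : θ ≤ 1)
    (L : EuclideanSpace ℝ (Fin N) →L[ℝ] EuclideanSpace ℝ (Fin N))
    (B : PiLp 2 (fun _ : Fin p => EuclideanSpace ℝ (Fin d)) →L[ℝ]
      PiLp 2 (fun _ : Fin p => EuclideanSpace ℝ (Fin d)))
    (hLbij : Function.Bijective L) (hBbij : Function.Bijective B)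
    (hL : L.adjoint.comp L = ContinuousLinearMap.id ℝ _ - K.adjoint.comp K)
    (hB : B.adjoint.comp B = ContinuousLinearMap.id ℝ _ - A.comp A.adjoint)
    (un ubarnp1 unp1 : EuclideanSpace ℝ (Fin N))
    (wn wnp1 : PiLp 2 (fun _ : Fin p => EuclideanSpace ℝ (Fin d)))
    (vn vnp1 zn znp1 : EuclideanSpace ℝ (Fin m))
    (hubar : ubarnp1 = un - K.adjoint (vn + K un - zn) - A.adjoint wn)
    (hw : wnp1 = Pproj mu (wn + A ubarnp1))
    (hu : unp1 = un - K.adjoint (vn + K un - zn) - A.adjoint wnp1)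
    (hz : znp1 = Qproj y eps (K unp1 + vn))
    (hv : vnp1 = vn + θ • (K unp1 - znp1))
    (uh : EuclideanSpace ℝ (Fin N))
    (wh : PiLp 2 (fun _ : Fin p => EuclideanSpace ℝ (Fin d)))
    (vh zh : EuclideanSpace ℝ (Fin m))
    (hfw : wh = Pproj mu (wh + A uh))
    (hfu : K.adjoint (vh + K uh - zh) + A.adjoint wh = 0)
    (hfz : zh = Qproj y eps (K uh + vh))
    (hfv : K uh = zh)
    :
    ‖L (unp1 - uh)‖ ^ 2 + ‖B (wnp1 - wh)‖ ^ 2 + θ⁻¹ * ‖vnp1 - vh‖ ^ 2 + ‖znp1 - zh‖ ^ 2 ≤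
      ‖L (un - uh)‖ ^ 2 + ‖B (wn - wh)‖ ^ 2 + θ⁻¹ * ‖vn - vh‖ ^ 2 + ‖zn - zh‖ ^ 2
        - ‖L (unp1 - un)‖ ^ 2 - ‖B (wnp1 - wn)‖ ^ 2 - ‖zh - zn - K (uh - unp1)‖ ^ 2 :=
  stmt5_general K A y eps heps mu hmu θ hθ0 hθ1 L B hL hB un ubarnp1 unp1 wn wnp1 vn vnp1 zn znp1
    hubar hw hu hz hv uh wh vh zh hfw hfu hfz hfv
end
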